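/- arXiv:2111.13160 — 3 statements merged into one kernel-verified Lean document; each statement's English description precedes it below -/
import Mathlib

section
/- Let O ∈ L(U;H) and set Q = O O* ∈ L(H). Then the range of the non-negative square root Q^{1/2} equals the range of O, and for every h in the range of O, ‖Q^{-1/2} h‖_H = ‖O^{-1} h‖_U, where Q^{-1/2} and O^{-1} denote the pseudo-inverses (minimal-norm preimages). -/
open scoped RealInnerProductSpace

/-! If `A A* = B B*`, then `A* k ↦ B* k` is a well-defined isometry, which extends to the
closure of the range of `A*`. Projecting `x` onto that closure does not change `A x` (the
orthogonal complement of the range of `A*` is the kernel of `A`) and does not increase its norm,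
and the isometry then produces `y` with `B y = A x` and `‖y‖ ≤ ‖x‖`. Since `Q^{1/2}` is
self-adjoint, this applies to `A = Q^{1/2}`, `B = O` and to `A = O`, `B = Q^{1/2}`, which gives
equality of the ranges and of the minimal preimage norms. -/

namespace ContinuousLinearMap

variable {𝕜 E F K : Type*} [RCLike 𝕜]
  [NormedAddCommGroup E] [InnerProductSpace 𝕜 E] [CompleteSpace E]
  [NormedAddCommGroup F] [InnerProductSpace 𝕜 F] [CompleteSpace F]
  [NormedAddCommGroup K] [InnerProductSpace 𝕜 K] [CompleteSpace K]

theorem norm_adjoint_apply_eq_of_comp_adjoint_eq {A : E →L[𝕜] K} {B : F →L[𝕜] K}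
    (h : A ∘L adjoint A = B ∘L adjoint B) (k : K) : ‖adjoint A k‖ = ‖adjoint B k‖ := by
  have hsq : ‖adjoint A k‖ ^ 2 = ‖adjoint B k‖ ^ 2 := by
    simp only [apply_norm_sq_eq_inner_adjoint_left, adjoint_adjoint, h]
  exact (pow_left_inj₀ (norm_nonneg _) (norm_nonneg _) two_ne_zero).1 hsq

theorem exists_apply_eq_norm_eq_of_mem_closure_range_adjoint
    {A : E →L[𝕜] K} {B : F →L[𝕜] K} (h : A ∘L adjoint A = B ∘L adjoint B) {p : E}
    (hp : p ∈ closure (Set.range (adjoint A))) :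
    ∃ q, B q = A p ∧ ‖q‖ = ‖p‖ := by
  obtain ⟨u, hu, hup⟩ := mem_closure_iff_seq_limit.mp hp
  choose k hk using hu
  obtain rfl := funext hk
  have hdist : ∀ m n, dist (adjoint B (k m)) (adjoint B (k n))
      = dist (adjoint A (k m)) (adjoint A (k n)) := fun m n => by
    simp only [dist_eq_norm, ← map_sub, norm_adjoint_apply_eq_of_comp_adjoint_eq h]
  have hcauchy : CauchySeq fun n => adjoint B (k n) := by
    refine Metric.cauchySeq_iff.2 fun ε hε => ?_
    obtain ⟨N, hN⟩ := Metric.cauchySeq_iff.1 hup.cauchySeq ε hε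
    exact ⟨N, fun m hm n hn => (hdist m n).trans_lt (hN m hm n hn)⟩
  obtain ⟨q, hq⟩ := cauchySeq_tendsto_of_complete hcauchy
  have hBB : ∀ n, B (adjoint B (k n)) = A (adjoint A (k n)) := fun n =>
    (DFunLike.congr_fun h (k n)).symm
  refine ⟨q, tendsto_nhds_unique ?_ ((A.continuous.tendsto p).comp hup), ?_⟩
  · simpa only [Function.comp_def, hBB] using (B.continuous.tendsto q).comp hq
  · refine tendsto_nhds_unique hq.norm ?_
    simpa only [norm_adjoint_apply_eq_of_comp_adjoint_eq h] using hup.norm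

theorem exists_apply_eq_norm_le_of_comp_adjoint_eq {A : E →L[𝕜] K} {B : F →L[𝕜] K}
    (h : A ∘L adjoint A = B ∘L adjoint B) (x : E) : ∃ y, B y = A x ∧ ‖y‖ ≤ ‖x‖ := by
  set R := (LinearMap.range (adjoint A : K →ₗ[𝕜] E)).topologicalClosure
  have hp : R.starProjection x ∈ closure (Set.range (adjoint A)) := by
    have := R.starProjection_apply_mem x
    rwa [← SetLike.mem_coe, Submodule.topologicalClosure_coe, LinearMap.coe_range, coe_coe]
      at this
  have hker : A (x - R.starProjection x) = 0 := by
    have := Submodule.orthogonal_le (Submodule.le_topologicalClosure _)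
      (R.sub_starProjection_mem_orthogonal x)
    rw [orthogonal_range, adjoint_adjoint] at this
    exact this
  obtain ⟨y, hyp, hy⟩ := exists_apply_eq_norm_eq_of_mem_closure_range_adjoint h hp
  refine ⟨y, ?_, hy.trans_le (R.norm_starProjection_apply_le x)⟩
  rw [hyp, eq_comm, ← sub_eq_zero, ← map_sub, hker]

end ContinuousLinearMap

theorem sInf_norm_preimage_le {α β γ : Type*} [Norm α] [SeminormedAddGroup β]
    {f : α → γ} {g : β → γ} (hfg : ∀ x, ∃ y, g y = f x ∧ ‖y‖ ≤ ‖x‖) {c : γ}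
    (hc : c ∈ Set.range f) :
    sInf {r : ℝ | ∃ y, g y = c ∧ ‖y‖ = r}
      ≤ sInf {r : ℝ | ∃ x, f x = c ∧ ‖x‖ = r} := by
  obtain ⟨x₀, rfl⟩ := hc
  have hbdd : BddBelow {r : ℝ | ∃ y, g y = f x₀ ∧ ‖y‖ = r} :=
    ⟨0, by rintro r ⟨y, -, rfl⟩; exact norm_nonneg y⟩
  refine le_csInf ⟨‖x₀‖, x₀, rfl, rfl⟩ ?_
  rintro r ⟨x, hx, rfl⟩
  obtain ⟨y, hy, hyx⟩ := hfg x
  exact (csInf_le hbdd ⟨y, hy.trans hx, rfl⟩).trans hyx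

theorem range_sqrt_eq_range_and_pseudoInverse_norm_general
    {U : Type*} [NormedAddCommGroup U] [InnerProductSpace ℝ U]
    [CompleteSpace U]
    {H : Type*} [NormedAddCommGroup H] [InnerProductSpace ℝ H]
    [CompleteSpace H]
    (O : U →L[ℝ] H) (S : H →L[ℝ] H)
    (hS_symm : ∀ x y : H, ⟪S x, y⟫ = ⟪x, S y⟫)
    (hS_sq : S ∘L S = O ∘L (ContinuousLinearMap.adjoint O)) :
    Set.range S = Set.range O ∧
      ∀ h ∈ Set.range O,
        sInf {r : ℝ | ∃ x : H, S x = h ∧ ‖x‖ = r}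
          = sInf {r : ℝ | ∃ y : U, O y = h ∧ ‖y‖ = r} := by
  have hSS : S ∘L ContinuousLinearMap.adjoint S = O ∘L ContinuousLinearMap.adjoint O := by
    rwa [(ContinuousLinearMap.isSelfAdjoint_iff_isSymmetric.2 hS_symm).adjoint_eq]
  have hSO := ContinuousLinearMap.exists_apply_eq_norm_le_of_comp_adjoint_eq hSS
  have hOS := ContinuousLinearMap.exists_apply_eq_norm_le_of_comp_adjoint_eq hSS.symm
  have hrange : Set.range S = Set.range O := by
    refine Set.Subset.antisymm ?_ ?_ <;> rintro _ ⟨x, rfl⟩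
    · obtain ⟨y, hy, -⟩ := hSO x
      exact ⟨y, hy⟩
    · obtain ⟨y, hy, -⟩ := hOS x
      exact ⟨y, hy⟩
  exact ⟨hrange, fun h hh =>
    le_antisymm (sInf_norm_preimage_le hOS hh) (sInf_norm_preimage_le hSO (hrange ▸ hh))⟩

/-- For O ∈ L(U;H) and Q = O O*, the range of the non-negative square root Q^{1/2}
equals the range of O, and the minimal norm of a Q^{1/2}-preimage of any h in the
range equals the minimal norm of an O-preimage (equality of pseudo-inverse norms). -/
theorem range_sqrt_eq_range_and_pseudoInverse_norm
    {U : Type*} [NormedAddCommGroup U] [InnerProductSpace ℝ U]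
    [CompleteSpace U] [TopologicalSpace.SeparableSpace U]
    {H : Type*} [NormedAddCommGroup H] [InnerProductSpace ℝ H]
    [CompleteSpace H] [TopologicalSpace.SeparableSpace H]
    (O : U →L[ℝ] H) (S : H →L[ℝ] H)
    (hS_symm : ∀ x y : H, ⟪S x, y⟫ = ⟪x, S y⟫)
    (hS_pos : ∀ x : H, 0 ≤ ⟪S x, x⟫)
    (hS_sq : S ∘L S = O ∘L (ContinuousLinearMap.adjoint O)) :
    Set.range S = Set.range O ∧
      ∀ h ∈ Set.range O,
        sInf {r : ℝ | ∃ x : H, S x = h ∧ ‖x‖ = r}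
          = sInf {r : ℝ | ∃ y : U, O y = h ∧ ‖y‖ = r} :=
  range_sqrt_eq_range_and_pseudoInverse_norm_general O S hS_symm hS_sq
end

section
/- Let U be a separable Hilbert space and μ a Borel probability measure on U that is invariant under rotation by π/4, i.e., the pushforward of μ⊗μ under (h,g) ↦ ((h−g)/√2, (h+g)/√2) equals μ⊗μ. Then there exists α > 0 such that ∫_U exp(α ‖h‖²) dμ(h) < ∞. -/
open MeasureTheory

lemma ContinuousLinearMap.rotation_neg_pi_div_four_apply {E : Type*} [SeminormedAddCommGroup E]
    [NormedSpace ℝ E] (p : E × E) :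
    ContinuousLinearMap.rotation (-(Real.pi / 4)) p
      = ((Real.sqrt 2)⁻¹ • (p.1 - p.2), (Real.sqrt 2)⁻¹ • (p.1 + p.2)) := by
  have h_sqrt : Real.sqrt 2 / 2 = (Real.sqrt 2)⁻¹ := by rw [Real.sqrt_div_self', one_div]
  simp only [ContinuousLinearMap.rotation_apply, Real.cos_neg, Real.sin_neg, neg_neg,
    Real.cos_pi_div_four, Real.sin_pi_div_four, h_sqrt, neg_smul, smul_add, smul_neg, sub_eq_add_neg]

theorem fernique_of_rotation_invariant_general
    {U : Type*} [NormedAddCommGroup U] [InnerProductSpace ℝ U]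
    [TopologicalSpace.SeparableSpace U]
    [MeasurableSpace U] [BorelSpace U]
    (μ : Measure U) [IsProbabilityMeasure μ]
    (hrot : Measure.map
        (fun p : U × U =>
          ((Real.sqrt 2)⁻¹ • (p.1 - p.2), (Real.sqrt 2)⁻¹ • (p.1 + p.2)))
        (μ.prod μ) = μ.prod μ) :
    ∃ α : ℝ, 0 < α ∧
      ∫⁻ h, ENNReal.ofReal (Real.exp (α * ‖h‖ ^ 2)) ∂μ < ⊤ := by
  have : SecondCountableTopology U := UniformSpace.secondCountable_of_separable U
  have h_rot : (μ.prod μ).map (ContinuousLinearMap.rotation (-(Real.pi / 4))) = μ.prod μ := by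
    convert hrot using 2
    exact funext ContinuousLinearMap.rotation_neg_pi_div_four_apply
  obtain ⟨α, hα, hint⟩ := ProbabilityTheory.exists_integrable_exp_sq_of_map_rotation_eq_self h_rot
  exact ⟨α, hα, hint.lintegral_lt_top⟩

/-- Fernique's theorem: a Borel probability measure on a separable Hilbert space
that is invariant under rotation by π/4 has a square-exponential moment. -/
theorem fernique_of_rotation_invariant
    {U : Type*} [NormedAddCommGroup U] [InnerProductSpace ℝ U]
    [CompleteSpace U] [TopologicalSpace.SeparableSpace U]
    [MeasurableSpace U] [BorelSpace U]
    (μ : Measure U) [IsProbabilityMeasure μ]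
    (hrot : Measure.map
        (fun p : U × U =>
          ((Real.sqrt 2)⁻¹ • (p.1 - p.2), (Real.sqrt 2)⁻¹ • (p.1 + p.2)))
        (μ.prod μ) = μ.prod μ) :
    ∃ α : ℝ, 0 < α ∧
      ∫⁻ h, ENNReal.ofReal (Real.exp (α * ‖h‖ ^ 2)) ∂μ < ⊤ :=
  fernique_of_rotation_invariant_general μ hrot
end

section
/- Let μ be a centred Gaussian measure on a separable Hilbert space H with M := ∫ ‖h‖ dμ(h). For each n ≥ 1 there exist constants C, α > 0 (independent of μ) such that ∫_H ‖h‖^{2n} dμ(h) ≤ n! C α^{-n} M^{2n}. In particular, for every p > 1 there is C_p with (∫‖h‖^p dμ)^{1/p} ≤ C_p (∫‖h‖² dμ)^{1/2}: all moments of a Gaussian are controlled by the second moment. -/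
/-!
Expand `h` in a Hilbert basis `(bᵢ)`, countable by separability: `‖h‖² = ∑ ⟪bᵢ, h⟫²` is a
countable sum of squares of centred real Gaussians. For each of them the Taylor bound
`xⁿ / n! ≤ eˣ`, applied to `x = t² / 4` and integrated against the standard Gaussian, gives
`∫ ⟪bᵢ, h⟫^(2n) ≤ 2 n! 4ⁿ (∫ ⟪bᵢ, h⟫²)ⁿ`, and Minkowski's inequality in `Lⁿ` carries this over
to the sum: `∫ ‖h‖^(2n) ≤ 2 n! 4ⁿ (∫ ‖h‖²)ⁿ`. For `n = 2` this reverse Hölder inequality,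
combined with Hölder's `∫ ‖h‖² ≤ (∫ ‖h‖)^(2/3) (∫ ‖h‖⁴)^(1/3)`, gives `∫ ‖h‖² ≤ 64 (∫ ‖h‖)²`
once `∫ ‖h‖²` is known to be finite, which is where Fernique's theorem enters. The `Lᵖ` bound
follows from the `L^(2n)` one with `n = ⌈p⌉`.
-/

open MeasureTheory ProbabilityTheory Real
open scoped NNReal ENNReal RealInnerProductSpace

section GaussianReal

lemma lintegral_enorm_sq_gaussianReal (v : ℝ≥0) : ∫⁻ x, ‖x‖ₑ ^ 2 ∂gaussianReal 0 v = v := by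
  have h := ofReal_variance (memLp_id_gaussianReal' (μ := 0) (v := v) 2 (by simp))
  simp only [variance_id_gaussianReal, evariance, id, integral_id_gaussianReal, sub_zero,
    ENNReal.ofReal_coe_nnreal] at h
  exact h.symm

lemma lintegral_enorm_pow_gaussianReal (v : ℝ≥0) (n : ℕ) :
    ∫⁻ x, ‖x‖ₑ ^ (2 * n) ∂gaussianReal 0 v
      = v ^ n * ∫⁻ x, ‖x‖ₑ ^ (2 * n) ∂gaussianReal 0 1 := by
  have hv : gaussianReal 0 v = (gaussianReal 0 1).map (√(v : ℝ) * ·) := by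
    rw [gaussianReal_map_const_mul, mul_zero, mul_one]
    congr
    ext
    simp
  rw [hv, lintegral_map (by fun_prop) (by fun_prop), ← lintegral_const_mul _ (by fun_prop)]
  congr with x
  rw [enorm_mul, mul_pow, pow_mul, Real.enorm_eq_ofReal_abs, ← ENNReal.ofReal_pow (abs_nonneg _),
    sq_abs, Real.sq_sqrt v.coe_nonneg, ENNReal.ofReal_coe_nnreal, pow_mul]

lemma lintegral_exp_sq_div_four_gaussianReal_le :
    ∫⁻ x, ENNReal.ofReal (rexp (x ^ 2 / 4)) ∂gaussianReal 0 1 ≤ 2 := by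
  rw [gaussianReal_of_var_ne_zero 0 one_ne_zero,
    lintegral_withDensity_eq_lintegral_mul _ (measurable_gaussianPDF 0 1) (by fun_prop)]
  have hdensity : ∀ x : ℝ, (gaussianPDF 0 1 * fun x ↦ ENNReal.ofReal (rexp (x ^ 2 / 4))) x
      = ENNReal.ofReal ((√(2 * π))⁻¹ * rexp (-(1 / 4) * x ^ 2)) := by
    intro x
    simp only [Pi.mul_apply, gaussianPDF, gaussianPDFReal, NNReal.coe_one, mul_one, sub_zero]
    rw [← ENNReal.ofReal_mul (by positivity), mul_assoc, ← Real.exp_add]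
    ring_nf
  simp only [hdensity]
  rw [← ofReal_integral_eq_lintegral_ofReal
      ((integrable_exp_neg_mul_sq (by norm_num)).const_mul _) (ae_of_all _ fun _ ↦ by positivity),
    integral_const_mul, integral_gaussian]
  refine ENNReal.ofReal_le_of_le_toReal ?_
  rw [ENNReal.toReal_ofNat, inv_mul_le_iff₀ (by positivity)]
  calc √(π / (1 / 4)) ≤ √(2 * π * 2 ^ 2) := Real.sqrt_le_sqrt (by nlinarith [pi_pos])
    _ = √(2 * π) * 2 := by rw [Real.sqrt_mul (by positivity), Real.sqrt_sq zero_le_two]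

lemma lintegral_enorm_pow_gaussianReal_zero_one_le (n : ℕ) :
    ∫⁻ x, ‖x‖ₑ ^ (2 * n) ∂gaussianReal 0 1 ≤ 2 * n.factorial * 4 ^ n := by
  have htaylor (x : ℝ) : ‖x‖ₑ ^ (2 * n)
      ≤ ENNReal.ofReal (n.factorial * 4 ^ n) * ENNReal.ofReal (rexp (x ^ 2 / 4)) := by
    rw [← ENNReal.ofReal_mul (by positivity), Real.enorm_eq_ofReal_abs,
      ← ENNReal.ofReal_pow (abs_nonneg _), pow_mul, sq_abs]
    refine ENNReal.ofReal_le_ofReal ?_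
    calc (x ^ 2) ^ n = (x ^ 2 / 4) ^ n / n.factorial * (n.factorial * 4 ^ n) := by
          field_simp
          rw [div_pow, div_mul_cancel₀ _ (by positivity)]
      _ ≤ rexp (x ^ 2 / 4) * (n.factorial * 4 ^ n) := by
          gcongr
          exact Real.pow_div_factorial_le_exp _ (by positivity) n
      _ = n.factorial * 4 ^ n * rexp (x ^ 2 / 4) := mul_comm _ _
  calc ∫⁻ x, ‖x‖ₑ ^ (2 * n) ∂gaussianReal 0 1
      ≤ ∫⁻ x, ENNReal.ofReal (n.factorial * 4 ^ n) * ENNReal.ofReal (rexp (x ^ 2 / 4))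
          ∂gaussianReal 0 1 := lintegral_mono htaylor
    _ ≤ ENNReal.ofReal (n.factorial * 4 ^ n) * 2 := by
        rw [lintegral_const_mul _ (by fun_prop)]
        gcongr
        exact lintegral_exp_sq_div_four_gaussianReal_le
    _ = 2 * n.factorial * 4 ^ n := by
        rw [ENNReal.ofReal_mul (by positivity), ENNReal.ofReal_pow (by norm_num),
          ENNReal.ofReal_natCast]
        norm_num
        ring

lemma lintegral_enorm_pow_gaussianReal_le (v : ℝ≥0) (n : ℕ) :
    ∫⁻ x, ‖x‖ₑ ^ (2 * n) ∂gaussianReal 0 v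
      ≤ 2 * n.factorial * 4 ^ n * (∫⁻ x, ‖x‖ₑ ^ 2 ∂gaussianReal 0 v) ^ n := by
  rw [lintegral_enorm_pow_gaussianReal, lintegral_enorm_sq_gaussianReal]
  calc (v : ℝ≥0∞) ^ n * ∫⁻ x, ‖x‖ₑ ^ (2 * n) ∂gaussianReal 0 1
      ≤ v ^ n * (2 * n.factorial * 4 ^ n) := by
        gcongr
        exact lintegral_enorm_pow_gaussianReal_zero_one_le n
    _ = 2 * n.factorial * 4 ^ n * v ^ n := mul_comm _ _

end GaussianReal

section LintegralInequalities

variable {α ι : Type*} [MeasurableSpace α] {μ : Measure α} {p : ℝ} {f : ι → α → ℝ≥0∞}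

lemma lintegral_rpow_finsetSum_le (hp : 1 ≤ p) (hf : ∀ i, AEMeasurable (f i) μ) (s : Finset ι) :
    (∫⁻ a, (∑ i ∈ s, f i a) ^ p ∂μ) ^ (1 / p) ≤ ∑ i ∈ s, (∫⁻ a, f i a ^ p ∂μ) ^ (1 / p) := by
  classical
  have hp0 : 0 < p := by linarith
  induction s using Finset.induction_on with
  | empty => simp [hp0]
  | insert j s hj ih =>
    simp only [Finset.sum_insert hj]
    calc (∫⁻ a, (f j a + ∑ i ∈ s, f i a) ^ p ∂μ) ^ (1 / p)
        ≤ (∫⁻ a, f j a ^ p ∂μ) ^ (1 / p) + (∫⁻ a, (∑ i ∈ s, f i a) ^ p ∂μ) ^ (1 / p) :=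
          ENNReal.lintegral_Lp_add_le (hf j) (Finset.aemeasurable_fun_sum s fun i _ ↦ hf i) hp
      _ ≤ _ := add_le_add_right ih _

lemma lintegral_rpow_tsum_le [Countable ι] (hp : 1 ≤ p) (hf : ∀ i, AEMeasurable (f i) μ) :
    (∫⁻ a, (∑' i, f i a) ^ p ∂μ) ^ (1 / p) ≤ ∑' i, (∫⁻ a, f i a ^ p ∂μ) ^ (1 / p) := by
  have hp0 : 0 < p := by linarith
  have hdir : Directed (· ≤ ·) fun (s : Finset ι) a ↦ (∑ i ∈ s, f i a) ^ p := by
    refine Monotone.directed_le fun s t hst a ↦ ?_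
    gcongr
  calc (∫⁻ a, (∑' i, f i a) ^ p ∂μ) ^ (1 / p)
      = ⨆ s : Finset ι, (∫⁻ a, (∑ i ∈ s, f i a) ^ p ∂μ) ^ (1 / p) := by
        have hrpow (q : ℝ) (hq : 0 < q) (g : Finset ι → ℝ≥0∞) : (⨆ s, g s) ^ q = ⨆ s, g s ^ q :=
          (ENNReal.orderIsoRpow q hq).map_iSup g
        simp_rw [ENNReal.tsum_eq_iSup_sum, hrpow p hp0]
        rw [lintegral_iSup_directed
            (fun s ↦ (Finset.aemeasurable_fun_sum s fun i _ ↦ hf i).pow_const p) hdir,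
          hrpow _ (by positivity)]
    _ ≤ ⨆ s : Finset ι, ∑ i ∈ s, (∫⁻ a, f i a ^ p ∂μ) ^ (1 / p) :=
        iSup_mono (lintegral_rpow_finsetSum_le hp hf)
    _ = ∑' i, (∫⁻ a, f i a ^ p ∂μ) ^ (1 / p) := ENNReal.tsum_eq_iSup_sum.symm

lemma lintegral_rpow_tsum_le_of_lintegral_rpow_le [Countable ι] (hp : 1 ≤ p)
    (hf : ∀ i, AEMeasurable (f i) μ) {c : ℝ≥0∞}
    (hc : ∀ i, ∫⁻ a, f i a ^ p ∂μ ≤ c * (∫⁻ a, f i a ∂μ) ^ p) :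
    ∫⁻ a, (∑' i, f i a) ^ p ∂μ ≤ c * (∫⁻ a, ∑' i, f i a ∂μ) ^ p := by
  have hp0 : 0 < p := by linarith
  have hroot : (∫⁻ a, (∑' i, f i a) ^ p ∂μ) ^ (1 / p) ≤ c ^ (1 / p) * ∫⁻ a, ∑' i, f i a ∂μ := by
    calc (∫⁻ a, (∑' i, f i a) ^ p ∂μ) ^ (1 / p)
        ≤ ∑' i, (∫⁻ a, f i a ^ p ∂μ) ^ (1 / p) := lintegral_rpow_tsum_le hp hf
      _ ≤ ∑' i, (c * (∫⁻ a, f i a ∂μ) ^ p) ^ (1 / p) := by gcongr with i; exact hc i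
      _ = c ^ (1 / p) * ∫⁻ a, ∑' i, f i a ∂μ := by
        simp_rw [ENNReal.mul_rpow_of_nonneg _ _ (by positivity : 0 ≤ 1 / p), ← ENNReal.rpow_mul,
          mul_one_div_cancel hp0.ne', ENNReal.rpow_one, ENNReal.tsum_mul_left, lintegral_tsum hf]
  have := ENNReal.rpow_le_rpow hroot hp0.le
  rwa [← ENNReal.rpow_mul, one_div_mul_cancel hp0.ne', ENNReal.rpow_one,
    ENNReal.mul_rpow_of_nonneg _ _ hp0.le, ← ENNReal.rpow_mul, one_div_mul_cancel hp0.ne',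
    ENNReal.rpow_one] at this

lemma lintegral_sq_le_of_lintegral_pow_four_le {F : α → ℝ≥0∞} (hF : AEMeasurable F μ)
    (hfin : ∫⁻ a, F a ^ 2 ∂μ ≠ ∞) {c : ℝ≥0∞}
    (hc : ∫⁻ a, F a ^ 4 ∂μ ≤ c * (∫⁻ a, F a ^ 2 ∂μ) ^ 2) :
    ∫⁻ a, F a ^ 2 ∂μ ≤ c * (∫⁻ a, F a ∂μ) ^ 2 := by
  set T := ∫⁻ a, F a ^ 2 ∂μ
  rcases eq_or_ne T 0 with hT | hT
  · simp [hT]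
  have hHolder : T ≤ (∫⁻ a, F a ∂μ) ^ (2 / 3 : ℝ) * (c * T ^ 2) ^ (1 / 3 : ℝ) := by
    calc T = ∫⁻ a, F a ^ (2 / 3 : ℝ) * (F a ^ 4) ^ (1 / 3 : ℝ) ∂μ := by
          refine lintegral_congr fun a ↦ ?_
          rw [← ENNReal.rpow_natCast (F a) 4, ← ENNReal.rpow_mul,
            ← ENNReal.rpow_add_of_nonneg _ _ (by norm_num) (by norm_num), ← ENNReal.rpow_natCast]
          norm_num
      _ ≤ (∫⁻ a, F a ∂μ) ^ (2 / 3 : ℝ) * (∫⁻ a, F a ^ 4 ∂μ) ^ (1 / 3 : ℝ) :=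
          ENNReal.lintegral_mul_norm_pow_le hF (hF.pow_const 4) (by norm_num) (by norm_num)
            (by norm_num)
      _ ≤ _ := by gcongr
  have hcube : T * T ^ 2 ≤ c * (∫⁻ a, F a ∂μ) ^ 2 * T ^ 2 := by
    calc T * T ^ 2 = T ^ 3 := by ring
      _ ≤ ((∫⁻ a, F a ∂μ) ^ (2 / 3 : ℝ) * (c * T ^ 2) ^ (1 / 3 : ℝ)) ^ 3 :=
          pow_le_pow_left' hHolder 3
      _ = c * (∫⁻ a, F a ∂μ) ^ 2 * T ^ 2 := by
        simp only [mul_pow, ← ENNReal.rpow_natCast, ← ENNReal.rpow_mul]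
        norm_num
        ring
  exact (ENNReal.mul_le_mul_iff_left (pow_ne_zero 2 hT) (ENNReal.pow_ne_top hfin)).1 hcube

end LintegralInequalities

lemma Orthonormal.countable {𝕜 E ι : Type*} [RCLike 𝕜] [NormedAddCommGroup E]
    [InnerProductSpace 𝕜 E] [TopologicalSpace.SeparableSpace E] {v : ι → E}
    (hv : Orthonormal 𝕜 v) : Countable ι := by
  refine Pairwise.countable_of_isOpen_disjoint (s := fun i ↦ Metric.ball (v i) (1 / 2))
    (fun i j hij ↦ Metric.ball_disjoint_ball ?_) (fun _ ↦ Metric.isOpen_ball)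
    (fun i ↦ ⟨v i, Metric.mem_ball_self one_half_pos⟩)
  have hsq : ‖v i - v j‖ ^ 2 = 2 := by
    rw [@norm_sub_sq 𝕜, hv.1 i, hv.1 j, hv.2 hij]
    norm_num
  rw [dist_eq_norm]
  nlinarith [norm_nonneg (v i - v j)]

lemma HilbertBasis.enorm_sq_eq_tsum {ι E : Type*} [NormedAddCommGroup E] [InnerProductSpace ℝ E]
    (b : HilbertBasis ι ℝ E) (x : E) : ‖x‖ₑ ^ 2 = ∑' i, ‖⟪b i, x⟫‖ₑ ^ 2 := by
  have hsum : HasSum (fun i ↦ ⟪b i, x⟫ ^ 2) (‖x‖ ^ 2) := by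
    simpa [← real_inner_self_eq_norm_sq, sq, real_inner_comm] using b.hasSum_inner_mul_inner x x
  simp_rw [← ofReal_norm, ← ENNReal.ofReal_pow (norm_nonneg _), Real.norm_eq_abs, sq_abs]
  rw [← ENNReal.ofReal_tsum_of_nonneg (fun _ ↦ sq_nonneg _) hsum.summable, hsum.tsum_eq]

lemma integral_norm_pow_eq_toReal_lintegral {α F : Type*} [MeasurableSpace α] {μ : Measure α}
    [NormedAddCommGroup F] {f : α → F} (hf : AEStronglyMeasurable f μ) (k : ℕ) :
    ∫ a, ‖f a‖ ^ k ∂μ = (∫⁻ a, ‖f a‖ₑ ^ k ∂μ).toReal := by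
  simpa [enorm_pow] using integral_norm_eq_lintegral_enorm (hf.norm.pow k)

lemma MemLp.integral_norm_rpow_rpow_eq_toReal_eLpNorm {α F : Type*} [MeasurableSpace α]
    {μ : Measure α} [NormedAddCommGroup F] {f : α → F} {p : ℝ} (hp : 0 < p)
    (hf : MemLp f (ENNReal.ofReal p) μ) :
    (∫ a, ‖f a‖ ^ p ∂μ) ^ (1 / p) = (eLpNorm f (ENNReal.ofReal p) μ).toReal := by
  rw [hf.eLpNorm_eq_integral_rpow_norm (by simpa using hp) ENNReal.ofReal_ne_top,
    ENNReal.toReal_ofReal hp.le, ENNReal.toReal_ofReal (by positivity), one_div]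

lemma lintegral_enorm_pow_le_of_map_eq_gaussianReal {E : Type*} [NormedAddCommGroup E]
    [NormedSpace ℝ E] [MeasurableSpace E] [OpensMeasurableSpace E] {μ : Measure E}
    {L : E →L[ℝ] ℝ} {v : ℝ≥0} (hL : μ.map L = gaussianReal 0 v) (n : ℕ) :
    ∫⁻ x, ‖L x‖ₑ ^ (2 * n) ∂μ ≤ 2 * n.factorial * 4 ^ n * (∫⁻ x, ‖L x‖ₑ ^ 2 ∂μ) ^ n := by
  have hmap (k : ℕ) : ∫⁻ x, ‖L x‖ₑ ^ k ∂μ = ∫⁻ y, ‖y‖ₑ ^ k ∂gaussianReal 0 v := by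
    rw [← hL, lintegral_map (by fun_prop) L.measurable]
  simpa only [hmap] using lintegral_enorm_pow_gaussianReal_le v n

def IsCenteredGaussian {E : Type*} [TopologicalSpace E] [AddCommMonoid E] [Module ℝ E]
    [MeasurableSpace E] (μ : Measure E) : Prop :=
  ∀ L : E →L[ℝ] ℝ, ∃ v : ℝ≥0, μ.map L = gaussianReal 0 v

lemma IsCenteredGaussian.isGaussian {E : Type*} [TopologicalSpace E] [AddCommMonoid E]
    [Module ℝ E] [MeasurableSpace E] [OpensMeasurableSpace E] {μ : Measure E}
    (hμ : IsCenteredGaussian μ) : IsGaussian μ :=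
  isGaussian_of_map_eq_gaussianReal fun L ↦ ⟨0, hμ L⟩

namespace IsCenteredGaussian

variable {E : Type*} [NormedAddCommGroup E] [InnerProductSpace ℝ E] [CompleteSpace E]
  [TopologicalSpace.SeparableSpace E] [MeasurableSpace E] [BorelSpace E] {μ : Measure E}

lemma lintegral_enorm_pow_le_lintegral_enorm_sq_pow (hμ : IsCenteredGaussian μ) {n : ℕ}
    (hn : 1 ≤ n) :
    ∫⁻ x, ‖x‖ₑ ^ (2 * n) ∂μ ≤ 2 * n.factorial * 4 ^ n * (∫⁻ x, ‖x‖ₑ ^ 2 ∂μ) ^ n := by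
  obtain ⟨w, b, -⟩ := exists_hilbertBasis ℝ E
  have := b.orthonormal.countable
  have hcoord (i : w) : ∫⁻ x, (‖⟪b i, x⟫‖ₑ ^ 2) ^ (n : ℝ) ∂μ
      ≤ 2 * n.factorial * 4 ^ n * (∫⁻ x, ‖⟪b i, x⟫‖ₑ ^ 2 ∂μ) ^ (n : ℝ) := by
    obtain ⟨v, hv⟩ := hμ (innerSL ℝ (b i))
    simpa [← pow_mul] using lintegral_enorm_pow_le_of_map_eq_gaussianReal hv n
  simpa [← b.enorm_sq_eq_tsum, ← pow_mul] using
    lintegral_rpow_tsum_le_of_lintegral_rpow_le (by exact_mod_cast hn) (fun i ↦ by fun_prop) hcoord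

lemma lintegral_enorm_sq_le (hμ : IsCenteredGaussian μ) :
    ∫⁻ x, ‖x‖ₑ ^ 2 ∂μ ≤ 64 * (∫⁻ x, ‖x‖ₑ ∂μ) ^ 2 := by
  have := hμ.isGaussian
  have hfin : ∫⁻ x, ‖x‖ₑ ^ 2 ∂μ ≠ ∞ := by
    simpa using (lintegral_rpow_enorm_lt_top_of_eLpNorm_lt_top two_ne_zero ENNReal.ofNat_ne_top
      (IsGaussian.memLp_two_id (μ := μ)).eLpNorm_lt_top).ne
  refine lintegral_sq_le_of_lintegral_pow_four_le (by fun_prop) hfin ?_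
  refine (hμ.lintegral_enorm_pow_le_lintegral_enorm_sq_pow (n := 2) one_le_two).trans_eq ?_
  norm_num

lemma lintegral_enorm_pow_le (hμ : IsCenteredGaussian μ) {n : ℕ} (hn : 1 ≤ n) :
    ∫⁻ x, ‖x‖ₑ ^ (2 * n) ∂μ ≤ 2 * n.factorial * 256 ^ n * (∫⁻ x, ‖x‖ₑ ∂μ) ^ (2 * n) :=
  calc ∫⁻ x, ‖x‖ₑ ^ (2 * n) ∂μ ≤ 2 * n.factorial * 4 ^ n * (∫⁻ x, ‖x‖ₑ ^ 2 ∂μ) ^ n :=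
        hμ.lintegral_enorm_pow_le_lintegral_enorm_sq_pow hn
    _ ≤ 2 * n.factorial * 4 ^ n * (64 * (∫⁻ x, ‖x‖ₑ ∂μ) ^ 2) ^ n := by
        gcongr
        exact hμ.lintegral_enorm_sq_le
    _ = 2 * n.factorial * 256 ^ n * (∫⁻ x, ‖x‖ₑ ∂μ) ^ (2 * n) := by
        rw [show (256 : ℝ≥0∞) ^ n = 4 ^ n * 64 ^ n by rw [← mul_pow]; norm_num]
        ring

lemma eLpNorm_id_le (hμ : IsCenteredGaussian μ) {n : ℕ} (hn : 1 ≤ n) :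
    eLpNorm id (2 * n) μ
      ≤ (2 * n.factorial * 4 ^ n : ℝ≥0∞) ^ (1 / (2 * n : ℝ)) * eLpNorm id 2 μ := by
  have hn0 : (0 : ℝ) < n := by exact_mod_cast hn
  rw [eLpNorm_eq_lintegral_rpow_enorm_toReal (by simp; omega) (by finiteness),
    eLpNorm_eq_lintegral_rpow_enorm_toReal two_ne_zero ENNReal.ofNat_ne_top]
  simp only [id, ENNReal.toReal_mul, ENNReal.toReal_ofNat, ENNReal.toReal_natCast]
  calc (∫⁻ x, ‖x‖ₑ ^ (2 * n : ℝ) ∂μ) ^ (1 / (2 * n : ℝ))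
      ≤ (2 * n.factorial * 4 ^ n * (∫⁻ x, ‖x‖ₑ ^ (2 : ℝ) ∂μ) ^ n) ^ (1 / (2 * n : ℝ)) := by
        gcongr
        exact_mod_cast hμ.lintegral_enorm_pow_le_lintegral_enorm_sq_pow hn
    _ = _ := by
        rw [ENNReal.mul_rpow_of_nonneg _ _ (by positivity),
          ← ENNReal.rpow_natCast (∫⁻ x, ‖x‖ₑ ^ (2 : ℝ) ∂μ), ← ENNReal.rpow_mul]
        congr 2
        field_simp

lemma integral_norm_pow_le (hμ : IsCenteredGaussian μ) {n : ℕ} (hn : 1 ≤ n) :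
    ∫ x, ‖x‖ ^ (2 * n) ∂μ ≤ 2 * n.factorial * 256 ^ n * (∫ x, ‖x‖ ∂μ) ^ (2 * n) := by
  have := hμ.isGaussian
  have hM : ∫⁻ x, ‖x‖ₑ ∂μ ≠ ∞ := (IsGaussian.integrable_id (μ := μ)).hasFiniteIntegral.ne
  rw [integral_norm_pow_eq_toReal_lintegral (f := fun x ↦ x) aestronglyMeasurable_id,
    integral_norm_eq_lintegral_enorm (f := fun x ↦ x) aestronglyMeasurable_id]
  refine (ENNReal.toReal_mono (by finiteness) (hμ.lintegral_enorm_pow_le hn)).trans_eq ?_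
  simp only [ENNReal.toReal_mul, ENNReal.toReal_pow, ENNReal.toReal_ofNat, ENNReal.toReal_natCast]

lemma integral_norm_rpow_rpow_le (hμ : IsCenteredGaussian μ) {p : ℝ} (hp : 0 < p) {n : ℕ}
    (hn : 1 ≤ n) (hpn : p ≤ 2 * n) :
    (∫ x, ‖x‖ ^ p ∂μ) ^ (1 / p) ≤ ((2 * n.factorial * 4 ^ n : ℝ≥0∞) ^ (1 / (2 * n : ℝ))).toReal
      * (∫ x, ‖x‖ ^ 2 ∂μ) ^ ((1 : ℝ) / 2) := by
  have := hμ.isGaussian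
  have hp_norm := MemLp.integral_norm_rpow_rpow_eq_toReal_eLpNorm hp
    (IsGaussian.memLp_id μ _ ENNReal.ofReal_ne_top)
  have h2_norm := MemLp.integral_norm_rpow_rpow_eq_toReal_eLpNorm two_pos
    (IsGaussian.memLp_id μ _ ENNReal.ofReal_ne_top)
  simp only [id, Real.rpow_two, ENNReal.ofReal_ofNat] at hp_norm h2_norm
  rw [hp_norm, h2_norm, ← ENNReal.toReal_mul]
  refine ENNReal.toReal_mono
    (ENNReal.mul_ne_top (by finiteness) (IsGaussian.memLp_id μ 2 (by simp)).eLpNorm_ne_top) ?_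
  calc eLpNorm id (ENNReal.ofReal p) μ ≤ eLpNorm id (2 * n) μ := by
        refine eLpNorm_le_eLpNorm_of_exponent_le ?_ aestronglyMeasurable_id
        rw [ENNReal.ofReal_le_iff_le_toReal (by finiteness)]
        simpa using hpn
    _ ≤ _ := hμ.eLpNorm_id_le hn

end IsCenteredGaussian

/-- All moments of a centred Gaussian measure on a separable Hilbert space are
controlled by the first moment M = ∫‖h‖ dμ: there are universal constants
C, α > 0 with ∫‖h‖^{2n} dμ ≤ n! C α^{-n} M^{2n} for all n ≥ 1; in particular for
every p > 1 there is C_p with (∫‖h‖^p dμ)^{1/p} ≤ C_p (∫‖h‖² dμ)^{1/2}. -/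
theorem gaussian_moments_controlled
    {H : Type*} [NormedAddCommGroup H] [InnerProductSpace ℝ H]
    [CompleteSpace H] [TopologicalSpace.SeparableSpace H]
    [MeasurableSpace H] [BorelSpace H] :
    (∃ C : ℝ, 0 < C ∧ ∃ α : ℝ, 0 < α ∧
      ∀ (μ : Measure H), IsProbabilityMeasure μ →
        (∀ φ : H →L[ℝ] ℝ, ∃ v : NNReal, Measure.map φ μ = gaussianReal 0 v) →
        ∀ n : ℕ, 1 ≤ n →
          ∫ h, ‖h‖ ^ (2 * n) ∂μ
            ≤ (Nat.factorial n : ℝ) * C * α ^ (-(n : ℤ)) * (∫ h, ‖h‖ ∂μ) ^ (2 * n)) ∧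
    ∀ p : ℝ, 1 < p → ∃ Cp : ℝ, 0 < Cp ∧
      ∀ (μ : Measure H), IsProbabilityMeasure μ →
        (∀ φ : H →L[ℝ] ℝ, ∃ v : NNReal, Measure.map φ μ = gaussianReal 0 v) →
          (∫ h, ‖h‖ ^ p ∂μ) ^ (1 / p)
            ≤ Cp * (∫ h, ‖h‖ ^ 2 ∂μ) ^ ((1 : ℝ) / 2) := by
  refine ⟨⟨2, two_pos, 256⁻¹, by norm_num, fun μ _ (hμ : IsCenteredGaussian μ) n hn ↦ ?_⟩,
    fun p hp ↦ ?_⟩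
  · refine (hμ.integral_norm_pow_le hn).trans_eq ?_
    rw [inv_zpow', neg_neg, zpow_natCast]
    ring
  · have hn : 1 ≤ ⌈p⌉₊ := Nat.one_le_ceil_iff.2 (by linarith)
    refine ⟨_, ENNReal.toReal_pos (by positivity) (by finiteness),
      fun μ _ (hμ : IsCenteredGaussian μ) ↦ hμ.integral_norm_rpow_rpow_le (by linarith) hn ?_⟩
    linarith [Nat.le_ceil p]
end
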